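/- With notation as in the Schur complement setting: let w_ℓ = H_ℓℓ^{-1/2} g̃_ℓ, B_ℓ = H_ℓℓ^{-1/2} H_ℓR H_RR^{-1/2}, and κ_ℓ = ‖B_ℓ‖₂² < 1. Then ½‖w_ℓ‖₂² ≤ Q^{(-ℓ)} - Q* ≤ (1/(2(1-κ_ℓ))) ‖w_ℓ‖₂². -/

import Mathlib

/-!
Completing the square in `θ_R` writes `Q(θ_ℓ, θ_R)` as `Q(0, θ_R + H_RR⁻¹ H_Rℓ θ_ℓ)` plus a
quadratic in `θ_ℓ` with linear term `g̃_ℓ` and Hessian the Schur complement `H_{ℓ|R}`, so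
`Q* - Q^{(-ℓ)}` is the minimum of that quadratic. In the variable `u = H_ℓℓ^{1/2} θ_ℓ` it reads
`w ⬝ u + ½ uᵀ (I - B Bᵀ) u`, and `(1 - κ) I ≤ I - B Bᵀ ≤ I` traps its minimum between those of
`w ⬝ u + ½ (1 - κ) ‖u‖²` and `w ⬝ u + ½ ‖u‖²`, namely `-‖w‖² / (2 (1 - κ))` and `-‖w‖² / 2`.
-/

open Matrix MeasureTheory BigOperators
noncomputable section

/-- Euclidean (spectral / operator) norm of a real square matrix. -/
def opN {n : Type*} [Fintype n] [DecidableEq n] (A : Matrix n n ℝ) : ℝ :=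
  ‖Matrix.toEuclideanCLM (𝕜 := ℝ) A‖

/-- Euclidean norm of a vector. -/
def vN {n : Type*} [Fintype n] (v : n → ℝ) : ℝ := Real.sqrt (∑ i, v i ^ 2)

/-- Operator norm of a rectangular real matrix. -/
def opNR {m n : Type*} [Fintype m] [Fintype n] [DecidableEq n] (A : Matrix m n ℝ) : ℝ :=
  ‖LinearMap.toContinuousLinearMap (Matrix.toEuclideanLin A)‖

/-- Square root of a positive semidefinite matrix (the former `Matrix.PosSemidef.sqrt`). -/
def psdSqrt {n : Type*} [Fintype n] [DecidableEq n] {A : Matrix n n ℝ} (hA : A.PosSemidef) :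
    Matrix n n ℝ :=
  (hA.1.eigenvectorUnitary : Matrix n n ℝ) * diagonal ((↑) ∘ (√·) ∘ hA.1.eigenvalues) *
    (star hA.1.eigenvectorUnitary : Matrix n n ℝ)

section PsdSqrt

variable {n : Type*} [Fintype n] [DecidableEq n] {A : Matrix n n ℝ}

lemma psdSqrt_mul_self (hA : A.PosSemidef) : psdSqrt hA * psdSqrt hA = A := by
  have hU : (star hA.1.eigenvectorUnitary : Matrix n n ℝ) * hA.1.eigenvectorUnitary = 1 :=
    Unitary.coe_star_mul_self _
  have hD : diagonal ((↑) ∘ (√·) ∘ hA.1.eigenvalues) * diagonal ((↑) ∘ (√·) ∘ hA.1.eigenvalues)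
      = diagonal ((RCLike.ofReal : ℝ → ℝ) ∘ hA.1.eigenvalues) := by
    rw [diagonal_mul_diagonal]
    congr 1
    ext i
    simp [Real.mul_self_sqrt (hA.eigenvalues_nonneg i)]
  conv_rhs => rw [hA.1.spectral_theorem, Unitary.conjStarAlgAut_apply]
  simp only [psdSqrt, Matrix.mul_assoc]
  rw [← Matrix.mul_assoc (star _ : Matrix n n ℝ), hU, Matrix.one_mul,
    ← Matrix.mul_assoc (diagonal _), hD]

lemma psdSqrt_transpose (hA : A.PosSemidef) : (psdSqrt hA)ᵀ = psdSqrt hA := by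
  rw [psdSqrt, Matrix.transpose_mul, Matrix.transpose_mul, diagonal_transpose,
    star_eq_conjTranspose, conjTranspose_eq_transpose_of_trivial, transpose_transpose,
    Matrix.mul_assoc]

lemma isUnit_det_psdSqrt (hA : A.PosDef) : IsUnit (psdSqrt hA.posSemidef).det := by
  have h : IsUnit (psdSqrt hA.posSemidef * psdSqrt hA.posSemidef).det := by
    rw [psdSqrt_mul_self, ← isUnit_iff_isUnit_det]
    exact hA.isUnit
  rw [det_mul] at h
  exact isUnit_of_mul_isUnit_left h

end PsdSqrt

lemma vN_sq {n : Type*} [Fintype n] (v : n → ℝ) : vN v ^ 2 = v ⬝ᵥ v := by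
  rw [vN, Real.sq_sqrt (by positivity)]
  simp [dotProduct, sq]

section OpNorm

open scoped Matrix.Norms.L2Operator

variable {m n : Type*} [Fintype m] [Fintype n] [DecidableEq n]

lemma opNR_eq_l2_opNorm (A : Matrix m n ℝ) : opNR A = ‖A‖ := rfl

lemma opNR_transpose [DecidableEq m] (A : Matrix m n ℝ) : opNR Aᵀ = opNR A := by
  rw [opNR_eq_l2_opNorm, opNR_eq_l2_opNorm, ← conjTranspose_eq_transpose_of_trivial,
    l2_opNorm_conjTranspose]

lemma mulVec_dotProduct_self_le (A : Matrix m n ℝ) (v : n → ℝ) :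
    (A *ᵥ v) ⬝ᵥ (A *ᵥ v) ≤ opNR A ^ 2 * (v ⬝ᵥ v) := by
  have h := A.l2_opNorm_mulVec (WithLp.toLp 2 v)
  rw [← opNR_eq_l2_opNorm] at h
  have hsq := pow_le_pow_left₀ (norm_nonneg _) h 2
  rw [mul_pow, EuclideanSpace.norm_sq_eq, EuclideanSpace.norm_sq_eq] at hsq
  simpa [dotProduct, sq] using hsq

end OpNorm

def quadratic {n : Type*} [Fintype n] (c : ℝ) (g : n → ℝ) (H : Matrix n n ℝ) (θ : n → ℝ) : ℝ :=
  c + g ⬝ᵥ θ + 1 / 2 * (θ ⬝ᵥ H *ᵥ θ)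

section Quadratic

variable {n : Type*} [Fintype n]

lemma quadratic_conj {k : Type*} [Fintype k] (c : ℝ) (g : k → ℝ) (M : Matrix k k ℝ)
    (P : Matrix k n ℝ) (x : n → ℝ) :
    quadratic c (Pᵀ *ᵥ g) (Pᵀ * M * P) x = quadratic c g M (P *ᵥ x) := by
  rw [quadratic, quadratic, ← mulVec_mulVec, ← mulVec_mulVec, dotProduct_mulVec x Pᵀ,
    vecMul_transpose, mulVec_transpose, ← dotProduct_mulVec]

lemma neg_div_le_quadratic {c : ℝ} (hc : 0 < c) (w : n → ℝ) {M : Matrix n n ℝ} {u : n → ℝ}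
    (hM : c * (u ⬝ᵥ u) ≤ u ⬝ᵥ M *ᵥ u) :
    -(1 / (2 * c)) * (w ⬝ᵥ w) ≤ quadratic 0 w M u := by
  have hsq : 0 ≤ star (c • u + w) ⬝ᵥ (c • u + w) := dotProduct_star_self_nonneg _
  simp only [star_trivial, add_dotProduct, dotProduct_add, smul_dotProduct, dotProduct_smul,
    smul_eq_mul, dotProduct_comm u w] at hsq
  have key : -(w ⬝ᵥ w) ≤ 2 * c * (w ⬝ᵥ u) + c * (u ⬝ᵥ M *ᵥ u) := by nlinarith
  calc -(1 / (2 * c)) * (w ⬝ᵥ w) = -(w ⬝ᵥ w) / (2 * c) := by ring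
    _ ≤ (2 * c * (w ⬝ᵥ u) + c * (u ⬝ᵥ M *ᵥ u)) / (2 * c) := by gcongr
    _ = quadratic 0 w M u := by rw [quadratic]; field_simp; ring

lemma quadratic_neg_le {w : n → ℝ} {M : Matrix n n ℝ} (hM : w ⬝ᵥ M *ᵥ w ≤ w ⬝ᵥ w) :
    quadratic 0 w M (-w) ≤ -(1 / 2) * (w ⬝ᵥ w) := by
  simp only [quadratic, dotProduct_neg, mulVec_neg, neg_dotProduct, neg_neg]
  linarith

end Quadratic

section Schur

variable {l r : Type*} [Fintype l] [Fintype r] [DecidableEq r]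

lemma quadratic_fromBlocks (c : ℝ) (gl : l → ℝ) (gR : r → ℝ) (A : Matrix l l ℝ)
    (C : Matrix l r ℝ) {D : Matrix r r ℝ} [Invertible D] (hD : D.IsHermitian)
    (x : l → ℝ) (y : r → ℝ) :
    quadratic c (gl ⊕ᵥ gR) (fromBlocks A C Cᵀ D) (x ⊕ᵥ y) =
      quadratic c gR D ((D⁻¹ * Cᵀ) *ᵥ x + y) +
        quadratic 0 (gl - C *ᵥ (D⁻¹ *ᵥ gR)) (A - C * D⁻¹ * Cᵀ) x := by
  have hschur := schur_complement_eq₂₂ A C x y hD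
  simp only [star_trivial, conjTranspose_eq_transpose_of_trivial, ← dotProduct_mulVec] at hschur
  have hDinv : (D⁻¹)ᵀ = D⁻¹ := by
    rw [transpose_nonsing_inv, ← conjTranspose_eq_transpose_of_trivial, hD.eq]
  have hlin : (C *ᵥ (D⁻¹ *ᵥ gR)) ⬝ᵥ x = gR ⬝ᵥ (D⁻¹ * Cᵀ) *ᵥ x := by
    rw [← mulVec_mulVec, dotProduct_mulVec, dotProduct_mulVec, vecMul_transpose,
      ← mulVec_transpose, hDinv]
  simp only [quadratic, hschur, sumElim_dotProduct_sumElim, dotProduct_add, sub_dotProduct, hlin]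
  ring

lemma quadratic_fromBlocks_eq_add (c : ℝ) (gl : l → ℝ) (gR : r → ℝ) (A : Matrix l l ℝ)
    (C : Matrix l r ℝ) {D : Matrix r r ℝ} [Invertible D] (hD : D.IsHermitian)
    (x : l → ℝ) (y : r → ℝ) :
    quadratic c (gl ⊕ᵥ gR) (fromBlocks A C Cᵀ D) (x ⊕ᵥ y) =
      quadratic c (gl ⊕ᵥ gR) (fromBlocks A C Cᵀ D) (0 ⊕ᵥ ((D⁻¹ * Cᵀ) *ᵥ x + y)) +
        quadratic 0 (gl - C *ᵥ (D⁻¹ *ᵥ gR)) (A - C * D⁻¹ * Cᵀ) x := by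
  rw [quadratic_fromBlocks _ _ _ _ _ hD, quadratic_fromBlocks _ _ _ _ _ hD]
  simp only [quadratic, mulVec_zero, zero_add, dotProduct_zero, mul_zero, add_zero]

lemma sub_mul_inv_mul_transpose_eq {P : Matrix l l ℝ} {R : Matrix r r ℝ} [DecidableEq l]
    (hP : IsUnit P.det) (hPt : Pᵀ = P) (hRt : Rᵀ = R) (C : Matrix l r ℝ) :
    P * P - C * (R * R)⁻¹ * Cᵀ =
      P * (1 - (P⁻¹ * C * R⁻¹) * (P⁻¹ * C * R⁻¹)ᵀ) * P := by
  have hBt : (P⁻¹ * C * R⁻¹)ᵀ = R⁻¹ * Cᵀ * P⁻¹ := by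
    rw [transpose_mul, transpose_mul, transpose_nonsing_inv, transpose_nonsing_inv, hPt, hRt,
      Matrix.mul_assoc]
  rw [hBt, Matrix.mul_sub, Matrix.sub_mul, Matrix.mul_one, Matrix.mul_inv_rev]
  congr 1
  simp only [Matrix.mul_assoc, mul_nonsing_inv_cancel_left _ _ hP, nonsing_inv_mul _ hP,
    Matrix.mul_one]

end Schur

section Contraction

variable {m n : Type*} [Fintype m] [Fintype n] [DecidableEq m]

lemma dotProduct_one_sub_mul_transpose_mulVec (B : Matrix m n ℝ) (u : m → ℝ) :
    u ⬝ᵥ (1 - B * Bᵀ) *ᵥ u = u ⬝ᵥ u - (Bᵀ *ᵥ u) ⬝ᵥ (Bᵀ *ᵥ u) := by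
  rw [sub_mulVec, one_mulVec, dotProduct_sub, ← mulVec_mulVec, dotProduct_mulVec,
    ← mulVec_transpose]

lemma dotProduct_one_sub_mul_transpose_mulVec_le (B : Matrix m n ℝ) (u : m → ℝ) :
    u ⬝ᵥ (1 - B * Bᵀ) *ᵥ u ≤ u ⬝ᵥ u := by
  have h := dotProduct_star_self_nonneg (Bᵀ *ᵥ u)
  rw [star_trivial] at h
  rw [dotProduct_one_sub_mul_transpose_mulVec]
  linarith

lemma one_sub_opNR_sq_mul_le [DecidableEq n] (B : Matrix m n ℝ) (u : m → ℝ) :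
    (1 - opNR B ^ 2) * (u ⬝ᵥ u) ≤ u ⬝ᵥ (1 - B * Bᵀ) *ᵥ u := by
  have h := mulVec_dotProduct_self_le Bᵀ u
  rw [opNR_transpose] at h
  rw [dotProduct_one_sub_mul_transpose_mulVec]
  linarith

end Contraction

lemma isLeast_sub_of_eq_add {l r : Type*} {Q : (l ⊕ r → ℝ) → ℝ} {ψ : (l → ℝ) → ℝ}
    {L : (l → ℝ) → r → ℝ} (hdec : ∀ x y, Q (x ⊕ᵥ y) = Q (0 ⊕ᵥ (L x + y)) + ψ x)
    {Qstar Qminus : ℝ} (hstar : IsLeast (Set.range Q) Qstar)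
    (hminus : IsLeast (Set.range fun y => Q (0 ⊕ᵥ y)) Qminus) :
    IsLeast (Set.range ψ) (Qstar - Qminus) := by
  obtain ⟨θ, rfl⟩ := hstar.1
  obtain ⟨y₀, rfl⟩ := hminus.1
  have hψ_le : ψ (θ ∘ Sum.inl) ≤ Q θ - Q (0 ⊕ᵥ y₀) := by
    have hmin := hminus.2 ⟨L (θ ∘ Sum.inl) + θ ∘ Sum.inr, rfl⟩
    have hθ := hdec (θ ∘ Sum.inl) (θ ∘ Sum.inr)
    rw [Sum.elim_comp_inl_inr] at hθ
    linarith
  have le_ψ : ∀ x, Q θ - Q (0 ⊕ᵥ y₀) ≤ ψ x := by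
    intro x
    have hmin := hstar.2 ⟨x ⊕ᵥ (y₀ - L x), rfl⟩
    rw [hdec, add_sub_cancel] at hmin
    linarith
  exact ⟨⟨θ ∘ Sum.inl, le_antisymm hψ_le (le_ψ _)⟩, Set.forall_mem_range.2 le_ψ⟩

/-- sandwich bound
`½‖w‖² ≤ Q^{(-ℓ)} - Q* ≤ ‖w‖²/(2(1-κ))` with `w = Hll^{-1/2} g̃`,
`κ = ‖Hll^{-1/2} HlR HRR^{-1/2}‖₂²`. -/
theorem freezing_penalty_sandwich
    {l r : Type*} [Fintype l] [DecidableEq l] [Fintype r] [DecidableEq r]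
    (Hll : Matrix l l ℝ) (HlR : Matrix l r ℝ) (HRl : Matrix r l ℝ) (HRR : Matrix r r ℝ)
    (hH : (Matrix.fromBlocks Hll HlR HRl HRR).PosDef)
    (hll : Hll.PosDef) (hRR : HRR.PosDef)
    (gl : l → ℝ) (gR : r → ℝ) (Q0 : ℝ)
    (Q : (l ⊕ r → ℝ) → ℝ)
    (hQ : ∀ θ, Q θ = Q0 + (Sum.elim gl gR) ⬝ᵥ θ +
      (1/2) * (θ ⬝ᵥ ((Matrix.fromBlocks Hll HlR HRl HRR) *ᵥ θ)))
    (gt : l → ℝ) (hgt : gt = gl - HlR *ᵥ (HRR⁻¹ *ᵥ gR))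
    (w : l → ℝ) (hw : w = (psdSqrt hll.posSemidef)⁻¹ *ᵥ gt)
    (B : Matrix l r ℝ) (hB : B = (psdSqrt hll.posSemidef)⁻¹ * HlR * (psdSqrt hRR.posSemidef)⁻¹)
    (κ : ℝ) (hκ : κ = opNR B ^ 2)
    (hκ1 : κ < 1)
    (Qstar Qminus : ℝ)
    (hstar : IsLeast (Set.range Q) Qstar)
    (hminus : IsLeast (Set.range fun θR : r → ℝ => Q (Sum.elim 0 θR)) Qminus) :
    (1/2) * vN w ^ 2 ≤ Qminus - Qstar ∧
    Qminus - Qstar ≤ (1 / (2 * (1 - κ))) * vN w ^ 2 := by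
  have hHRl : HRl = HlRᵀ := by
    simpa [fromBlocks_transpose] using (congrArg toBlocks₂₁ hH.isHermitian.eq).symm
  subst hHRl
  have hQ' : Q = quadratic Q0 (gl ⊕ᵥ gR) (fromBlocks Hll HlR HlRᵀ HRR) := funext hQ
  have : Invertible HRR := hRR.isUnit.invertible
  set sA := psdSqrt hll.posSemidef
  have hsA : sAᵀ = sA := psdSqrt_transpose _
  have hsA_det : IsUnit sA.det := isUnit_det_psdSqrt hll
  have hschur : Hll - HlR * HRR⁻¹ * HlRᵀ = sAᵀ * (1 - B * Bᵀ) * sA := by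
    conv_lhs => rw [← psdSqrt_mul_self hll.posSemidef, ← psdSqrt_mul_self hRR.posSemidef]
    rw [hsA, hB]
    exact sub_mul_inv_mul_transpose_eq hsA_det hsA (psdSqrt_transpose _) HlR
  have hgt' : gt = sAᵀ *ᵥ w := by
    rw [hw, hsA, mulVec_mulVec, mul_nonsing_inv _ hsA_det, one_mulVec]
  have hmin : IsLeast (Set.range fun x => quadratic 0 w (1 - B * Bᵀ) (sA *ᵥ x))
      (Qstar - Qminus) := by
    refine isLeast_sub_of_eq_add (L := ((HRR⁻¹ * HlRᵀ) *ᵥ ·)) (fun x y => ?_) hstar hminus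
    rw [hQ', quadratic_fromBlocks_eq_add _ _ _ _ _ hRR.isHermitian, ← hgt, hschur, hgt',
      quadratic_conj]
  have hlower : -(1 / (2 * (1 - κ))) * (w ⬝ᵥ w) ≤ Qstar - Qminus := by
    obtain ⟨x, hx⟩ := hmin.1
    rw [← hx, hκ]
    exact neg_div_le_quadratic (by linarith) w (one_sub_opNR_sq_mul_le B _)
  have hupper : Qstar - Qminus ≤ -(1 / 2) * (w ⬝ᵥ w) := by
    calc Qstar - Qminus ≤ quadratic 0 w (1 - B * Bᵀ) (sA *ᵥ (sA⁻¹ *ᵥ -w)) := hmin.2 ⟨_, rfl⟩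
      _ = quadratic 0 w (1 - B * Bᵀ) (-w) := by
        rw [mulVec_mulVec, mul_nonsing_inv _ hsA_det, one_mulVec]
      _ ≤ -(1 / 2) * (w ⬝ᵥ w) := quadratic_neg_le (dotProduct_one_sub_mul_transpose_mulVec_le B w)
  rw [vN_sq]
  constructor <;> linarith
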